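/- arXiv:2310.04265 — 2 statements merged into one kernel-verified Lean document; each statement's English description precedes it below -/
import Mathlib

section
/- Let 𝒯 be a class of tournaments (closed under induced subtournaments). The following are equivalent: (i) 𝒯 is χ⃗-bounded; (ii) the class 𝒯^≺ = { T^≺ : T ∈ 𝒯, ≺ a total order on V(T) } of all backedge graphs of members of 𝒯 is χ-bounded; (iii) the class 𝒯^≺_ω⃗ = { T^≺ : T ∈ 𝒯, ≺ an ω⃗-ordering of T } is χ-bounded. -/
structure Dig (V : Type*) where
  Adj : V → V → Prop
  irrefl : ∀ v, ¬ Adj v v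
  asymm : ∀ u v, Adj u v → ¬ Adj v u

structure Tournament (V : Type*) extends Dig V where
  total : ∀ u v, u ≠ v → Adj u v ∨ Adj v u

variable {V : Type*}

/-- The backedge graph of a digraph with respect to a (strict total) order `r`:
`u` and `v` are adjacent iff the arc between them goes backwards with respect to `r`. -/
def Dig.backedge (D : Dig V) (r : V → V → Prop) : SimpleGraph V where
  Adj u v := (r u v ∧ D.Adj v u) ∨ (r v u ∧ D.Adj u v)
  symm := ⟨by intro u v h; tauto⟩
  loopless := ⟨by intro v h; rcases h with ⟨_, h⟩ | ⟨_, h⟩ <;> exact D.irrefl v h⟩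

/-- The clique number of an undirected graph. -/
noncomputable def gOmega (G : SimpleGraph V) : ℕ :=
  sSup {n | ∃ s : Finset V, G.IsNClique n s}

/-- The chromatic number of an undirected graph (as a natural number). -/
noncomputable def gChi (G : SimpleGraph V) : ℕ :=
  sInf {n | G.Colorable n}

/-- The sub-digraph induced on `S` is acyclic: there is no directed cycle inside `S`. -/
def Dig.AcyclicOn (D : Dig V) (S : Set V) : Prop :=
  ∀ v, ¬ Relation.TransGen (fun x y => x ∈ S ∧ y ∈ S ∧ D.Adj x y) v v

/-- The dichromatic number: the least `n` such that the vertices can be partitioned into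
`n` acyclic parts. -/
noncomputable def Dig.dichi (D : Dig V) : ℕ :=
  sInf {n | ∃ c : V → Fin n, ∀ i, D.AcyclicOn {v | c v = i}}

/-- The clique number of a digraph: the minimum over all strict total orders of the
clique number of the associated backedge graph. -/
noncomputable def Dig.cliqueNum (D : Dig V) : ℕ :=
  sInf {m | ∃ r : V → V → Prop, IsStrictTotalOrder V r ∧ gOmega (D.backedge r) = m}

/-- The induced subtournament obtained by pulling back along an injection. -/
def Tournament.pull {V W : Type*} (T : Tournament V) (f : W ↪ V) : Tournament W where
  Adj a b := T.Adj (f a) (f b)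
  irrefl a := T.irrefl (f a)
  asymm a b := T.asymm (f a) (f b)
  total a b h := T.total (f a) (f b) (fun e => h (f.injective e))

/-!
Acyclic sets of a tournament induce transitive subtournaments, so inside one colour class of an
acyclic colouring the backward arcs of an ordering form a strict partial order whose chains are
cliques of the backedge graph. Colouring each class by height in this order (Mirsky) shows
`χ(T^≺) ≤ χ⃗(T) · ω(T^≺)`. Conversely every colour class of a proper colouring of `T^≺` only
carries forward arcs, hence is acyclic, so `χ⃗(T) ≤ χ(T^≺)`; applied to an `ω⃗`-ordering this gives
`χ⃗(T) ≤ f(ω⃗(T))`.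
-/

section Graph

variable {G : SimpleGraph V}

lemma le_gOmega_of_isNClique [Finite V] {s : Finset V} {m : ℕ} (h : G.IsNClique m s) :
    m ≤ gOmega G := by
  have := Fintype.ofFinite V
  refine le_csSup ⟨Fintype.card V, ?_⟩ ⟨s, h⟩
  rintro _ ⟨t, ht⟩
  exact ht.card_eq ▸ t.card_le_univ

lemma colorable_gChi [Finite V] (G : SimpleGraph V) : G.Colorable (gChi G) :=
  have := Fintype.ofFinite V
  Nat.sInf_mem (s := {n | G.Colorable n}) ⟨_, G.colorable_of_fintype⟩

lemma gChi_le_of_colorable {k : ℕ} (h : G.Colorable k) : gChi G ≤ k :=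
  Nat.sInf_le h

variable [PartialOrder V] [Finite V]

lemma LTSeries.length_lt_gOmega (hG : ∀ a b : V, a < b → G.Adj a b) (p : LTSeries V) :
    p.length < gOmega G := by
  let s := Finset.univ.map ⟨p, p.strictMono.injective⟩
  have hs : G.IsNClique (p.length + 1) s := by
    refine ⟨?_, by simp [s]⟩
    simp only [s, Finset.coe_map, Function.Embedding.coeFn_mk, Finset.coe_univ, Set.image_univ]
    rintro _ ⟨i, rfl⟩ _ ⟨j, rfl⟩ hij
    rcases lt_or_gt_of_ne (ne_of_apply_ne p hij) with h | h
    · exact hG _ _ (p.strictMono h)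
    · exact (hG _ _ (p.strictMono h)).symm
  exact le_gOmega_of_isNClique hs

lemma Order.height_lt_gOmega (hG : ∀ a b : V, a < b → G.Adj a b) (a : V) :
    Order.height a < gOmega G := by
  by_contra! h
  obtain ⟨p, -, hp⟩ := Order.exists_series_of_le_height a h
  exact (hp ▸ p.length_lt_gOmega hG).false

/-- Mirsky: the height function colours a comparability graph with `ω` colours. -/
lemma exists_strictMono_fin_gOmega (hG : ∀ a b : V, a < b → G.Adj a b) :
    ∃ h : V → Fin (gOmega G), StrictMono h := by
  have hfin a := Order.height_lt_gOmega hG a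
  have hcast a : ((Order.height a).toNat : ℕ∞) = Order.height a :=
    ENat.natCast_toNat (hfin a).ne_top
  refine ⟨fun a => ⟨(Order.height a).toNat, ENat.natCast_lt_natCast.1 (hcast a ▸ hfin a)⟩,
    fun a b hab => Fin.mk_lt_mk.2 (ENat.natCast_lt_natCast.1 ?_)⟩
  rw [hcast, hcast]
  exact Order.height_strictMono hab ((hfin a).trans (ENat.natCast_lt_top _))

end Graph

namespace Dig

variable (D : Dig V) {r : V → V → Prop}

lemma cliqueNum_le_gOmega_backedge (hr : IsStrictTotalOrder V r) :
    D.cliqueNum ≤ gOmega (D.backedge r) :=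
  Nat.sInf_le ⟨r, hr, rfl⟩

lemma exists_gOmega_backedge_eq_cliqueNum :
    ∃ r, IsStrictTotalOrder V r ∧ gOmega (D.backedge r) = D.cliqueNum :=
  Nat.sInf_mem (s := {m | ∃ r, IsStrictTotalOrder V r ∧ gOmega (D.backedge r) = m})
    ⟨_, WellOrderingRel, inferInstance, rfl⟩

/-- A set without backedges only carries arcs going forward in `r`. -/
lemma acyclicOn_of_backedge_independent (hr : IsStrictTotalOrder V r) {S : Set V}
    (hS : ∀ x ∈ S, ∀ y ∈ S, ¬ (D.backedge r).Adj x y) : D.AcyclicOn S := by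
  intro v hv
  have hforward : ∀ x y, (x ∈ S ∧ y ∈ S ∧ D.Adj x y) → r x y := by
    rintro x y ⟨hx, hy, hxy⟩
    rcases trichotomous_of r x y with h | rfl | h
    · exact h
    · exact absurd hxy (D.irrefl x)
    · exact absurd (Or.inl ⟨h, hxy⟩) (hS y hy x hx)
  have hv := Relation.TransGen.mono hforward v v hv
  rw [Relation.transGen_eq_self] at hv
  exact irrefl_of r v hv

lemma exists_acyclic_partition_of_colorable (hr : IsStrictTotalOrder V r) {k : ℕ}
    (hk : (D.backedge r).Colorable k) : ∃ c : V → Fin k, ∀ i, D.AcyclicOn {v | c v = i} := by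
  obtain ⟨C⟩ := hk
  refine ⟨C, fun i => D.acyclicOn_of_backedge_independent hr ?_⟩
  rintro x (hx : C x = i) y (hy : C y = i) hxy
  exact C.valid hxy (hx.trans hy.symm)

lemma exists_acyclic_partition_dichi [Finite V] :
    ∃ c : V → Fin D.dichi, ∀ i, D.AcyclicOn {v | c v = i} :=
  Nat.sInf_mem (s := {n | ∃ c : V → Fin n, ∀ i, D.AcyclicOn {v | c v = i}})
    ⟨_, D.exists_acyclic_partition_of_colorable (inferInstance : IsStrictTotalOrder V
      WellOrderingRel) (colorable_gChi _)⟩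

lemma dichi_le_gChi_backedge [Finite V] (hr : IsStrictTotalOrder V r) :
    D.dichi ≤ gChi (D.backedge r) :=
  Nat.sInf_le (D.exists_acyclic_partition_of_colorable hr (colorable_gChi _))

lemma dichi_le_of_forall_omegaOrdering [Finite V] {f : ℕ → ℕ}
    (hf : ∀ r, IsStrictTotalOrder V r → gOmega (D.backedge r) = D.cliqueNum →
      gChi (D.backedge r) ≤ f (gOmega (D.backedge r))) :
    D.dichi ≤ f D.cliqueNum := by
  obtain ⟨r, hr, hω⟩ := D.exists_gOmega_backedge_eq_cliqueNum
  calc D.dichi ≤ gChi (D.backedge r) := D.dichi_le_gChi_backedge hr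
    _ ≤ f D.cliqueNum := hω ▸ hf r hr hω

end Dig

namespace Tournament

variable (T : Tournament V) {r : V → V → Prop}

lemma adj_trans_of_acyclicOn {S : Set V} (hS : T.AcyclicOn S) {x y z : V}
    (hx : x ∈ S) (hy : y ∈ S) (hz : z ∈ S) (hxy : T.Adj x y) (hyz : T.Adj y z) : T.Adj x z := by
  have hxz : x ≠ z := by
    rintro rfl
    exact T.asymm x y hxy hyz
  refine (T.total x z hxz).resolve_right fun hzx => hS x ?_
  exact .tail (.tail (.single ⟨hx, hy, hxy⟩) ⟨hy, hz, hyz⟩) ⟨hz, hx, hzx⟩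

lemma gChi_backedge_le_dichi_mul [Finite V] (hr : IsStrictTotalOrder V r) :
    gChi (T.backedge r) ≤ T.dichi * gOmega (T.backedge r) := by
  obtain ⟨c, hc⟩ := T.exists_acyclic_partition_dichi
  let q u v := c u = c v ∧ r u v ∧ T.Adj v u
  have : IsStrictOrder V q :=
    { irrefl := fun v hv => irrefl_of r v hv.2.1
      trans := fun u v w ⟨huv, hruv, hvu⟩ ⟨hvw, hrvw, hwv⟩ =>
        ⟨huv.trans hvw, trans_of r hruv hrvw,
          T.adj_trans_of_acyclicOn (hc (c u)) (huv.trans hvw).symm huv.symm rfl hwv hvu⟩ }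
  let := partialOrderOfSO q
  obtain ⟨ht, ht_mono⟩ := exists_strictMono_fin_gOmega (G := T.backedge r)
    fun u v (huv : q u v) => Or.inl ⟨huv.2.1, huv.2.2⟩
  let C : (T.backedge r).Coloring (Fin T.dichi × Fin (gOmega (T.backedge r))) :=
    SimpleGraph.Coloring.mk (fun v => (c v, ht v)) fun {u v} huv heq => by
      obtain ⟨hcuv, htuv⟩ := Prod.ext_iff.1 heq
      rcases huv with ⟨hruv, hvu⟩ | ⟨hrvu, huv⟩
      · exact (ht_mono (show q u v from ⟨hcuv, hruv, hvu⟩)).ne htuv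
      · exact (ht_mono (show q v u from ⟨hcuv.symm, hrvu, huv⟩)).ne' htuv
  simpa using gChi_le_of_colorable C.colorable

/-- `f` need not be monotone, hence its maximum up to `ω(T^≺) ≥ ω⃗(T)`. -/
lemma gChi_backedge_le_of_dichi_le [Finite V] (hr : IsStrictTotalOrder V r) {f : ℕ → ℕ}
    (hf : T.dichi ≤ f T.cliqueNum) :
    gChi (T.backedge r) ≤
      (Finset.range (gOmega (T.backedge r) + 1)).sup f * gOmega (T.backedge r) := by
  refine (T.gChi_backedge_le_dichi_mul hr).trans (Nat.mul_le_mul_right _ (hf.trans ?_))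
  exact Finset.le_sup (Finset.mem_range_succ_iff.2 (T.cliqueNum_le_gOmega_backedge hr))

end Tournament

theorem stmt_4_general (𝒯 : ∀ n : ℕ, Tournament (Fin n) → Prop) :
    ((∃ f : ℕ → ℕ, ∀ n (T : Tournament (Fin n)), 𝒯 n T →
        T.toDig.dichi ≤ f T.toDig.cliqueNum) ↔
      (∃ f : ℕ → ℕ, ∀ n (T : Tournament (Fin n)), 𝒯 n T →
        ∀ r : Fin n → Fin n → Prop, IsStrictTotalOrder (Fin n) r →
          gChi (T.toDig.backedge r) ≤ f (gOmega (T.toDig.backedge r)))) ∧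
    ((∃ f : ℕ → ℕ, ∀ n (T : Tournament (Fin n)), 𝒯 n T →
        ∀ r : Fin n → Fin n → Prop, IsStrictTotalOrder (Fin n) r →
          gChi (T.toDig.backedge r) ≤ f (gOmega (T.toDig.backedge r))) ↔
      (∃ f : ℕ → ℕ, ∀ n (T : Tournament (Fin n)), 𝒯 n T →
        ∀ r : Fin n → Fin n → Prop, IsStrictTotalOrder (Fin n) r →
          gOmega (T.toDig.backedge r) = T.toDig.cliqueNum →
            gChi (T.toDig.backedge r) ≤ f (gOmega (T.toDig.backedge r)))) := by
  refine ⟨⟨fun ⟨f, hf⟩ => ⟨fun k => (Finset.range (k + 1)).sup f * k, ?_⟩, fun ⟨f, hf⟩ => ⟨f, ?_⟩⟩,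
    ⟨fun ⟨f, hf⟩ => ⟨f, fun n T hT r hr _ => hf n T hT r hr⟩,
      fun ⟨f, hf⟩ => ⟨fun k => (Finset.range (k + 1)).sup f * k, ?_⟩⟩⟩
  · exact fun n T hT r hr => T.gChi_backedge_le_of_dichi_le hr (hf n T hT)
  · exact fun n T hT => T.toDig.dichi_le_of_forall_omegaOrdering fun r hr _ => hf n T hT r hr
  · exact fun n T hT r hr =>
      T.gChi_backedge_le_of_dichi_le hr (T.toDig.dichi_le_of_forall_omegaOrdering (hf n T hT))

/-- For a class `𝒯` of tournaments closed under induced subtournaments, the following are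
equivalent: (i) `𝒯` is χ⃗-bounded; (ii) the class of all backedge graphs of members of `𝒯`
is χ-bounded; (iii) the class of backedge graphs coming from ω⃗-orderings is χ-bounded. -/
theorem stmt_4 (𝒯 : ∀ n : ℕ, Tournament (Fin n) → Prop)
    (hclosed : ∀ n m (T : Tournament (Fin n)), 𝒯 n T → ∀ f : Fin m ↪ Fin n, 𝒯 m (T.pull f)) :
    ((∃ f : ℕ → ℕ, ∀ n (T : Tournament (Fin n)), 𝒯 n T →
        T.toDig.dichi ≤ f T.toDig.cliqueNum) ↔
      (∃ f : ℕ → ℕ, ∀ n (T : Tournament (Fin n)), 𝒯 n T →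
        ∀ r : Fin n → Fin n → Prop, IsStrictTotalOrder (Fin n) r →
          gChi (T.toDig.backedge r) ≤ f (gOmega (T.toDig.backedge r)))) ∧
    ((∃ f : ℕ → ℕ, ∀ n (T : Tournament (Fin n)), 𝒯 n T →
        ∀ r : Fin n → Fin n → Prop, IsStrictTotalOrder (Fin n) r →
          gChi (T.toDig.backedge r) ≤ f (gOmega (T.toDig.backedge r))) ↔
      (∃ f : ℕ → ℕ, ∀ n (T : Tournament (Fin n)), 𝒯 n T →
        ∀ r : Fin n → Fin n → Prop, IsStrictTotalOrder (Fin n) r →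
          gOmega (T.toDig.backedge r) = T.toDig.cliqueNum →
            gChi (T.toDig.backedge r) ≤ f (gOmega (T.toDig.backedge r)))) :=
  stmt_4_general 𝒯
end

section
/- For every integer n ≥ 1, the tournament S̃_n satisfies ω⃗(S̃_n) ≥ n. -/
variable {V : Type*}

/-- Vertex set of the tournament `S̃ n` : `S̃ 1` has one vertex and
`S̃ (n+1)` consists of three copies of `S̃ n`. -/
def StV : ℕ → Type
  | 0 => PUnit
  | 1 => PUnit
  | n + 2 => Fin 3 × StV (n + 1)

/-- The arc relation of `S̃ n`: inside a copy, use the relation of `S̃ (n-1)`;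
between copies, all arcs go from copy `i` to copy `i+1 (mod 3)`. -/
def StAdj : (n : ℕ) → StV n → StV n → Prop
  | 0, _, _ => False
  | 1, _, _ => False
  | n + 2, p, q => (p.1 = q.1 ∧ StAdj (n + 1) p.2 q.2) ∨ q.1 = p.1 + 1

lemma fin3_ne_add_one : ∀ i : Fin 3, ¬ i = i + 1 := by decide
lemma fin3_asymm : ∀ i j : Fin 3, j = i + 1 → i = j + 1 → False := by decide
lemma fin3_total : ∀ i j : Fin 3, i ≠ j → j = i + 1 ∨ i = j + 1 := by decide

lemma StAdj_irrefl : ∀ (n : ℕ) (v : StV n), ¬ StAdj n v v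
  | 0, _, h => h
  | 1, _, h => h
  | n + 2, v, h => by
    rcases h with ⟨-, h⟩ | h
    · exact StAdj_irrefl (n + 1) v.2 h
    · exact fin3_ne_add_one v.1 h

lemma StAdj_asymm : ∀ (n : ℕ) (u v : StV n), StAdj n u v → StAdj n v u → False
  | 0, _, _, h, _ => h
  | 1, _, _, h, _ => h
  | n + 2, u, v, h, h' => by
    rcases h with ⟨hij, h⟩ | h <;> rcases h' with ⟨hji, h'⟩ | h'
    · exact StAdj_asymm (n + 1) u.2 v.2 h h'
    · rw [hij] at h'; exact fin3_ne_add_one v.1 h'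
    · rw [hji] at h; exact fin3_ne_add_one u.1 h
    · exact fin3_asymm u.1 v.1 h h'

lemma StAdj_total : ∀ (n : ℕ) (u v : StV n), u ≠ v → StAdj n u v ∨ StAdj n v u
  | 0, PUnit.unit, PUnit.unit, h => absurd rfl h
  | 1, PUnit.unit, PUnit.unit, h => absurd rfl h
  | n + 2, u, v, h => by
    by_cases hij : u.1 = v.1
    · have hxy : u.2 ≠ v.2 := by
        intro e
        exact h (Prod.ext_iff.mpr ⟨hij, e⟩)
      rcases StAdj_total (n + 1) u.2 v.2 hxy with h' | h'
      · exact Or.inl (Or.inl ⟨hij, h'⟩)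
      · exact Or.inr (Or.inl ⟨hij.symm, h'⟩)
    · rcases fin3_total u.1 v.1 hij with h' | h'
      · exact Or.inl (Or.inr h')
      · exact Or.inr (Or.inr h')

/-- The tournament `S̃ n`: `S̃ 1 = TT₁` and `S̃ (n+1) = Δ(S̃ n, S̃ n, S̃ n)`. -/
def Stilde (n : ℕ) : Tournament (StV n) where
  Adj := StAdj n
  irrefl := StAdj_irrefl n
  asymm := fun u v h h' => StAdj_asymm n u v h h'
  total := StAdj_total n

/-! Fix a strict total order on `S̃ (n+1)` and let `v` be its minimum. Every arc into `v` is then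
a backedge at `v`, and all arcs leave the copy of `S̃ n` preceding the copy of `v` in the cyclic
order towards `v`. By induction that copy contains a backedge clique of size `n` for the restricted
order, and adding `v` gives one of size `n + 1`. -/

open SimpleGraph

variable {W : Type*}

lemma SimpleGraph.IsNClique.le_gOmega [Finite V] {G : SimpleGraph V} {n : ℕ} {s : Finset V}
    (h : G.IsNClique n s) : n ≤ gOmega G :=
  h.card_eq ▸ h.isClique.card_le_cliqueNum

namespace Dig

lemma backedge_adj_of_adj_of_forall_not_rel (D : Dig V) {r : V → V → Prop} [Std.Trichotomous r]
    {u v : V} (hv : ∀ w, ¬ r w v) (huv : D.Adj u v) : (D.backedge r).Adj v u := by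
  refine Or.inl ⟨?_, huv⟩
  rcases trichotomous_of r v u with h | h | h
  · exact h
  · exact absurd (h ▸ huv) (D.irrefl u)
  · exact absurd h (hv u)

lemma map_backedge_preimage_le {D' : Dig W} {D : Dig V} (f : W ↪ V)
    (hf : ∀ x y, D'.Adj x y → D.Adj (f x) (f y)) (r : V → V → Prop) :
    (D'.backedge (f ⁻¹'o r)).map f ≤ D.backedge r := by
  rw [map_le_iff_le_comap]
  rintro x y (hxy | hxy)
  · exact Or.inl ⟨hxy.1, hf _ _ hxy.2⟩
  · exact Or.inr ⟨hxy.1, hf _ _ hxy.2⟩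

lemma exists_isNClique_backedge_succ [Finite V] [Nonempty V] {D : Dig V} {D' : Dig W} {n : ℕ}
    (hD' : ∀ (r' : W → W → Prop) [IsStrictTotalOrder W r'], ∃ s, (D'.backedge r').IsNClique n s)
    (hcopy : ∀ v, ∃ f : W ↪ V, (∀ x y, D'.Adj x y → D.Adj (f x) (f y)) ∧ ∀ x, D.Adj (f x) v)
    (r : V → V → Prop) [IsStrictTotalOrder V r] :
    ∃ s, (D.backedge r).IsNClique (n + 1) s := by
  classical
  obtain ⟨v, -, hv⟩ := (Finite.wellFounded_of_trans_of_irrefl r).has_min Set.univ Set.univ_nonempty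
  obtain ⟨f, hf, hfv⟩ := hcopy v
  have := (RelEmbedding.preimage f r).isStrictTotalOrder
  obtain ⟨s, hs⟩ := hD' (f ⁻¹'o r)
  refine ⟨insert v (s.map f), (hs.map.mono (map_backedge_preimage_le f hf r)).insert ?_⟩
  simp only [Finset.mem_map]
  rintro _ ⟨x, -, rfl⟩
  exact D.backedge_adj_of_adj_of_forall_not_rel (fun w => hv w trivial) (hfv x)

end Dig

instance StV.finite : ∀ n, Finite (StV n)
  | 0 | 1 => inferInstanceAs (Finite PUnit)
  | n + 2 => have := StV.finite (n + 1); inferInstanceAs (Finite (Fin 3 × StV (n + 1)))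

instance StV.nonempty : ∀ n, Nonempty (StV n)
  | 0 | 1 => inferInstanceAs (Nonempty PUnit)
  | n + 2 => have := StV.nonempty (n + 1); inferInstanceAs (Nonempty (Fin 3 × StV (n + 1)))

lemma fin3_eq_add_two_add_one : ∀ i : Fin 3, i = i + 2 + 1 := by decide

/-- Copy `i + 2` of `S̃ (n+2)` sends all its arcs into copy `i`. -/
def StV.precedingCopy {n : ℕ} (i : Fin 3) : StV (n + 1) ↪ StV (n + 2) where
  toFun x := ((i + 2, x) : Fin 3 × StV (n + 1))
  inj' _ _ h := congrArg Prod.snd h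

lemma exists_isNClique_backedge_stilde :
    ∀ (n : ℕ) (r : StV n → StV n → Prop) [IsStrictTotalOrder (StV n) r],
      ∃ s, ((Stilde n).backedge r).IsNClique n s
  | 0, _, _ => ⟨∅, by simp⟩
  | 1, _, _ => ⟨{PUnit.unit}, isNClique_one.mpr ⟨_, rfl⟩⟩
  | n + 2, r, _ =>
    Dig.exists_isNClique_backedge_succ (exists_isNClique_backedge_stilde (n + 1))
      (fun v => ⟨StV.precedingCopy (n := n) v.1,
        fun _ _ h => Or.inl ⟨rfl, h⟩, fun _ => Or.inr (fin3_eq_add_two_add_one _)⟩) r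

theorem stmt_6_general (n : ℕ) : n ≤ (Stilde n).toDig.cliqueNum := by
  refine le_csInf ⟨_, WellOrderingRel, inferInstance, rfl⟩ ?_
  rintro _ ⟨r, hr, rfl⟩
  obtain ⟨s, hs⟩ := exists_isNClique_backedge_stilde n r
  exact hs.le_gOmega

/-- For every `n ≥ 1`, `ω⃗(S̃ n) ≥ n`. -/
theorem stmt_6 (n : ℕ) (hn : 1 ≤ n) : n ≤ (Stilde n).toDig.cliqueNum :=
  stmt_6_general n
end
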